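/- Let F : C → B and G : D → B be coverings of k-categories with C connected, and let J : B → B be an isomorphism of k-categories acting as the identity on objects. If H₁, H₂ : C → D are k-linear functors with G ∘ H₁ = J ∘ F and G ∘ H₂ = J ∘ F, and H₁ and H₂ coincide on some object of C, then H₁ = H₂. -/

import Mathlib

open CategoryTheory

universe w v u

section CoveringDefs

variable (k : Type w) [CommRing k]

/-- A functor between `k`-linear categories is `k`-linear:
it is additive and commutes with the scalar action on morphisms. -/
def IsLinearFunctor {C : Type u} [Category.{v} C] [Preadditive C] [CategoryTheory.Linear k C]
    {B : Type u} [Category.{v} B] [Preadditive B] [CategoryTheory.Linear k B]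
    (F : C ⥤ B) : Prop :=
  (∀ (x y : C) (f g : x ⟶ y), F.map (f + g) = F.map f + F.map g) ∧
  (∀ (x y : C) (r : k) (f : x ⟶ y), F.map (r • f) = r • F.map f)

variable {C : Type u} [Category.{v} C] [Preadditive C] [CategoryTheory.Linear k C]
variable {B : Type u} [Category.{v} B] [Preadditive B] [CategoryTheory.Linear k B]

/-- The canonical map `⊕_{y ∈ F⁻¹(c)} C(x,y) →+ B(F(x),c)` induced by `F`
on the source star. -/
noncomputable def starOutHom (F : C ⥤ B) (hF : IsLinearFunctor k F) (x : C) (c : B) :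
    (DirectSum {y : C // F.obj y = c} (fun y => (x ⟶ y.1))) →+ (F.obj x ⟶ c) := by
  classical
  exact DirectSum.toAddMonoid fun y =>
    AddMonoidHom.mk' (fun f => F.map f ≫ eqToHom y.2)
      (fun f g => by (try simp only []); rw [hF.1 _ _ f g, Preadditive.add_comp])

/-- The canonical map `⊕_{y ∈ F⁻¹(c)} C(y,x) →+ B(c,F(x))` induced by `F`
on the target star. -/
noncomputable def starInHom (F : C ⥤ B) (hF : IsLinearFunctor k F) (x : C) (c : B) :
    (DirectSum {y : C // F.obj y = c} (fun y => (y.1 ⟶ x))) →+ (c ⟶ F.obj x) := by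
  classical
  exact DirectSum.toAddMonoid fun y =>
    AddMonoidHom.mk' (fun f => eqToHom y.2.symm ≫ F.map f)
      (fun f g => by (try simp only []); rw [hF.1 _ _ f g, Preadditive.comp_add])

/-- `F : C ⥤ B` is a covering of `k`-categories: it is a `k`-linear functor,
surjective on objects, inducing bijections on all source and target stars. -/
def IsCovering (F : C ⥤ B) : Prop :=
  ∃ hF : IsLinearFunctor k F,
    Function.Surjective F.obj ∧
    (∀ (x : C) (c : B), Function.Bijective (starOutHom k F hF x c)) ∧
    (∀ (x : C) (c : B), Function.Bijective (starInHom k F hF x c))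

end CoveringDefs

/-- A `k`-category is connected if the equivalence relation generated by
"there is a nonzero morphism from `x` to `y`" relates any two objects. -/
def IsConnectedKCat (C : Type u) [Category.{v} C] [Preadditive C] : Prop :=
  ∀ x y : C, Relation.EqvGen (fun a b : C => ∃ f : a ⟶ b, f ≠ 0) x y

section GaloisDefs

variable (k : Type w) [CommRing k]
variable {C : Type u} [Category.{v} C] [Preadditive C] [CategoryTheory.Linear k C]
variable {B : Type u} [Category.{v} B] [Preadditive B] [CategoryTheory.Linear k B]
variable {D : Type u} [Category.{v} D] [Preadditive D] [CategoryTheory.Linear k D]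

/-- `H` belongs to `Aut₁ F`: it is an invertible `k`-linear endofunctor with `F ∘ H = F`. -/
def MemAut1 (F : C ⥤ B) (H : C ⥤ C) : Prop :=
  IsLinearFunctor k H ∧
  (∃ Hinv : C ⥤ C, H ⋙ Hinv = 𝟭 C ∧ Hinv ⋙ H = 𝟭 C) ∧
  H ⋙ F = F

/-- A covering is Galois if its source is connected and `Aut₁ F` acts transitively
on some fibre. -/
def IsGaloisCovering (F : C ⥤ B) : Prop :=
  IsCovering k F ∧ IsConnectedKCat C ∧
  ∃ b₀ : B, ∀ x y : C, F.obj x = b₀ → F.obj y = b₀ →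
    ∃ H : C ⥤ C, MemAut1 k F H ∧ H.obj x = y

/-- A morphism `(H, J)` of coverings from `F : C ⥤ B` to `G : D ⥤ B`:
`H` and `J` are `k`-linear, `J` is an isomorphism which is the identity on objects,
and `G ∘ H = J ∘ F`. -/
def IsCoveringMorphism (F : C ⥤ B) (G : D ⥤ B) (H : C ⥤ D) (J : B ⥤ B) : Prop :=
  IsLinearFunctor k H ∧ IsLinearFunctor k J ∧
  (∃ Jinv : B ⥤ B, J ⋙ Jinv = 𝟭 B ∧ Jinv ⋙ J = 𝟭 B) ∧
  (∀ b : B, J.obj b = b) ∧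
  H ⋙ G = F ⋙ J

end GaloisDefs

/-- A universal covering: a Galois covering `U` such that for every Galois covering
`F : C ⥤ B` and every pair of objects `u₀`, `c₀` above the same object of `B`,
there is a unique `k`-linear functor `H` with `F ∘ H = U` and `H u₀ = c₀`. -/
def IsUniversalCovering (k : Type w) [CommRing k]
    {U' : Type u} [Category.{v} U'] [Preadditive U'] [CategoryTheory.Linear k U']
    {B : Type u} [Category.{v} B] [Preadditive B] [CategoryTheory.Linear k B]
    (U : U' ⥤ B) : Prop :=
  IsGaloisCovering k U ∧
  ∀ (C : Type u) [Category.{v} C] [Preadditive C] [CategoryTheory.Linear k C]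
    (F : C ⥤ B), IsGaloisCovering k F →
    ∀ (u₀ : U') (c₀ : C), U.obj u₀ = F.obj c₀ →
      ∃! H : U' ⥤ C, IsLinearFunctor k H ∧ H ⋙ F = U ∧ H.obj u₀ = c₀

/-- Given a functor `F : C ⥤ B`, a choice `x` of objects of `C` above each object of `B`,
and an endofunctor `H` of `C`, the subset `Z_H(c,b) = F(C(x_b, H x_c))` of `B(b,c)`. -/
def gradeSet {C : Type u} [Category.{v} C] {B : Type u} [Category.{v} B]
    (F : C ⥤ B) (x : B → C) (H : C ⥤ C) (b c : B) : Set (b ⟶ c) :=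
  {g | ∃ (h₁ : b = F.obj (x b)) (h₂ : F.obj (H.obj (x c)) = c)
        (f : x b ⟶ H.obj (x c)), g = eqToHom h₁ ≫ F.map f ≫ eqToHom h₂}

/-- The homogeneous component `Z_H(c,b)` as a `k`-submodule of `B(b,c)`. -/
noncomputable def gradeSubmodule (k : Type w) [CommRing k]
    {C : Type u} [Category.{v} C]
    {B : Type u} [Category.{v} B] [Preadditive B] [CategoryTheory.Linear k B]
    (F : C ⥤ B) (x : B → C) (H : C ⥤ C) (b c : B) : Submodule k (b ⟶ c) :=
  Submodule.span k (gradeSet F x H b c)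

/-
Both `H₁` and `H₂` lift `F ⋙ J` through the covering `G`. Since `F` and `J` kill no nonzero
morphism, neither does a lift, and injectivity of `G` on the stars then shows that along a nonzero
morphism the two lifts agree at one end iff they agree at the other. Connectedness of `C` spreads
the agreement at `x` to all objects, and faithfulness of `G` then forces the functors to be equal.
-/

theorem DirectSum.eq_of_of_eq_of {ι : Type*} [DecidableEq ι] {β : ι → Type*}
    [∀ i, AddCommMonoid (β i)] {i j : ι} {x : β i} {y : β j}
    (h : DirectSum.of β i x = DirectSum.of β j y) (hx : x ≠ 0) : i = j := by
  by_contra hij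
  apply hx
  simpa [DirectSum.of_eq_of_ne j i y hij] using congr($h i)

section Covering

variable {k : Type w} [CommRing k]
  {C : Type u} [Category.{v} C] [Preadditive C] [CategoryTheory.Linear k C]
  {B : Type u} [Category.{v} B] [Preadditive B] [CategoryTheory.Linear k B]
  {F : C ⥤ B}

theorem IsLinearFunctor.additive (hF : IsLinearFunctor k F) : F.Additive :=
  ⟨hF.1 _ _ _ _⟩

-- `DirectSum.of` must use the same decidability instance as the `classical` inside `starOutHom`.
open scoped Classical in
theorem starOutHom_of (hF : IsLinearFunctor k F) (x : C) {c : B} (y : {y : C // F.obj y = c})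
    (f : x ⟶ y.1) :
    starOutHom k F hF x c (DirectSum.of (fun y => x ⟶ y.1) y f) = F.map f ≫ eqToHom y.2 := by
  simp [starOutHom]

open scoped Classical in
theorem starInHom_of (hF : IsLinearFunctor k F) (x : C) {c : B} (y : {y : C // F.obj y = c})
    (f : y.1 ⟶ x) :
    starInHom k F hF x c (DirectSum.of (fun y => y.1 ⟶ x) y f) = eqToHom y.2.symm ≫ F.map f := by
  simp [starInHom]

namespace IsCovering

open scoped Classical in
theorem faithful (hF : IsCovering k F) : F.Faithful where
  map_injective {x y} f g hfg := by
    obtain ⟨hlin, -, hout, -⟩ := hF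
    refine DirectSum.of_injective (β := fun y' : {y' // F.obj y' = F.obj y} => x ⟶ y'.1)
      ⟨y, rfl⟩ ((hout x (F.obj y)).1 ?_)
    rw [starOutHom_of, starOutHom_of, hfg]

open scoped Classical in
theorem eq_of_map_comp_eqToHom_eq (hF : IsCovering k F) {x y₁ y₂ : C} {c : B}
    (h₁ : F.obj y₁ = c) (h₂ : F.obj y₂ = c) {f₁ : x ⟶ y₁} {f₂ : x ⟶ y₂} (hf₁ : f₁ ≠ 0)
    (h : F.map f₁ ≫ eqToHom h₁ = F.map f₂ ≫ eqToHom h₂) : y₁ = y₂ := by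
  obtain ⟨hlin, -, hout, -⟩ := hF
  have hof := (hout x c).1 (a₁ := DirectSum.of _ ⟨y₁, h₁⟩ f₁) (a₂ := DirectSum.of _ ⟨y₂, h₂⟩ f₂)
    (by rw [starOutHom_of, starOutHom_of, h])
  exact congrArg Subtype.val (DirectSum.eq_of_of_eq_of hof hf₁)

open scoped Classical in
theorem eq_of_eqToHom_comp_map_eq (hF : IsCovering k F) {x y₁ y₂ : C} {c : B}
    (h₁ : F.obj y₁ = c) (h₂ : F.obj y₂ = c) {f₁ : y₁ ⟶ x} {f₂ : y₂ ⟶ x} (hf₁ : f₁ ≠ 0)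
    (h : eqToHom h₁.symm ≫ F.map f₁ = eqToHom h₂.symm ≫ F.map f₂) : y₁ = y₂ := by
  obtain ⟨hlin, -, -, hin⟩ := hF
  have hof := (hin x c).1 (a₁ := DirectSum.of _ ⟨y₁, h₁⟩ f₁) (a₂ := DirectSum.of _ ⟨y₂, h₂⟩ f₂)
    (by rw [starInHom_of, starInHom_of, h])
  exact congrArg Subtype.val (DirectSum.eq_of_of_eq_of hof hf₁)

end IsCovering

end Covering

theorem IsConnectedKCat.iff_of_forall_ne_zero {C : Type*} [Category C] [Preadditive C]
    (hC : IsConnectedKCat C) {P : C → Prop}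
    (hP : ∀ {a b : C} (f : a ⟶ b), f ≠ 0 → (P a ↔ P b)) (x y : C) : P x ↔ P y := by
  have hiff : Equivalence fun a b : C => (P a ↔ P b) := ⟨fun _ => Iff.rfl, Iff.symm, Iff.trans⟩
  exact hiff.eqvGen_iff.mp ((hC x y).mono fun _ _ ⟨f, hf⟩ => hP f hf)

theorem CategoryTheory.Functor.eq_zero_of_map_eq_zero_of_comp_eq {C D B : Type*} [Category C]
    [Category D] [Category B] [Limits.HasZeroMorphisms C] [Limits.HasZeroMorphisms D]
    [Limits.HasZeroMorphisms B] {H : C ⥤ D} {G : D ⥤ B} {K : C ⥤ B}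
    [G.PreservesZeroMorphisms] [K.PreservesZeroMorphisms] [K.Faithful]
    (h : H ⋙ G = K) {a b : C} {f : a ⟶ b} (hf : H.map f = 0) : f = 0 := by
  subst h
  exact (H ⋙ G).map_eq_zero_iff.mp (by simp [hf])

section Lifting

variable {k : Type w} [CommRing k]
  {B : Type u} [Category.{v} B] [Preadditive B] [CategoryTheory.Linear k B]
  {D : Type u} [Category.{v} D] [Preadditive D] [CategoryTheory.Linear k D]
  {C : Type*} [Category C] [Preadditive C] {G : D ⥤ B} {H₁ H₂ : C ⥤ D}

theorem IsCovering.obj_eq_iff_of_ne_zero (hG : IsCovering k G) (h : H₁ ⋙ G = H₂ ⋙ G)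
    (hH₁ : ∀ {a b : C} (f : a ⟶ b), H₁.map f = 0 → f = 0) {a b : C} {f : a ⟶ b} (hf : f ≠ 0) :
    H₁.obj a = H₂.obj a ↔ H₁.obj b = H₂.obj b := by
  have hGf := Functor.congr_hom h f
  simp only [Functor.comp_map] at hGf
  constructor
  · intro ha
    refine hG.eq_of_map_comp_eqToHom_eq rfl (Functor.congr_obj h b).symm
      (f₂ := eqToHom ha ≫ H₂.map f) (mt (hH₁ f) hf) ?_
    simp [hGf, eqToHom_map]
  · intro hb
    refine hG.eq_of_eqToHom_comp_map_eq rfl (Functor.congr_obj h a).symm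
      (f₂ := H₂.map f ≫ eqToHom hb.symm) (mt (hH₁ f) hf) ?_
    simp [hGf, eqToHom_map]

theorem IsCovering.functor_ext_of_obj_eq (hG : IsCovering k G) (hC : IsConnectedKCat C)
    (h : H₁ ⋙ G = H₂ ⋙ G) (hH₁ : ∀ {a b : C} (f : a ⟶ b), H₁.map f = 0 → f = 0) {x : C}
    (hx : H₁.obj x = H₂.obj x) : H₁ = H₂ := by
  have hobj (y : C) : H₁.obj y = H₂.obj y :=
    (hC.iff_of_forall_ne_zero (fun _ hf => hG.obj_eq_iff_of_ne_zero h hH₁ hf) x y).mp hx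
  have := hG.faithful
  refine CategoryTheory.Functor.ext hobj fun a b f => G.map_injective ?_
  simpa [eqToHom_map] using Functor.congr_hom h f

end Lifting

theorem covering_morphisms_eq_of_agree_on_object_general (k : Type w) [CommRing k]
    {C : Type u} [Category.{v} C] [Preadditive C] [CategoryTheory.Linear k C]
    {B : Type u} [Category.{v} B] [Preadditive B] [CategoryTheory.Linear k B]
    {D : Type u} [Category.{v} D] [Preadditive D] [CategoryTheory.Linear k D]
    (F : C ⥤ B) (G : D ⥤ B) (hF : IsCovering k F) (hG : IsCovering k G)
    (hC : IsConnectedKCat C)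
    (J : B ⥤ B) (hJlin : IsLinearFunctor k J)
    (hJinv : ∃ Jinv : B ⥤ B, J ⋙ Jinv = 𝟭 B ∧ Jinv ⋙ J = 𝟭 B)
    (H₁ H₂ : C ⥤ D)
    (hH₁ : H₁ ⋙ G = F ⋙ J) (hH₂ : H₂ ⋙ G = F ⋙ J)
    (x : C) (hx : H₁.obj x = H₂.obj x) :
    H₁ = H₂ := by
  obtain ⟨Jinv, hJJinv, -⟩ := hJinv
  have : J.Faithful := Functor.Faithful.of_comp_eq hJJinv
  have : J.Additive := hJlin.additive
  have : F.Faithful := hF.faithful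
  have : F.Additive := hF.1.additive
  have : G.Additive := hG.1.additive
  exact hG.functor_ext_of_obj_eq hC (hH₁.trans hH₂.symm)
    (fun _ hf => Functor.eq_zero_of_map_eq_zero_of_comp_eq hH₁ hf) hx

theorem covering_morphisms_eq_of_agree_on_object (k : Type w) [CommRing k]
    {C : Type u} [Category.{v} C] [Preadditive C] [CategoryTheory.Linear k C]
    {B : Type u} [Category.{v} B] [Preadditive B] [CategoryTheory.Linear k B]
    {D : Type u} [Category.{v} D] [Preadditive D] [CategoryTheory.Linear k D]
    (F : C ⥤ B) (G : D ⥤ B) (hF : IsCovering k F) (hG : IsCovering k G)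
    (hC : IsConnectedKCat C)
    (J : B ⥤ B) (hJlin : IsLinearFunctor k J)
    (hJinv : ∃ Jinv : B ⥤ B, J ⋙ Jinv = 𝟭 B ∧ Jinv ⋙ J = 𝟭 B)
    (hJobj : ∀ b : B, J.obj b = b)
    (H₁ H₂ : C ⥤ D) (hH₁lin : IsLinearFunctor k H₁) (hH₂lin : IsLinearFunctor k H₂)
    (hH₁ : H₁ ⋙ G = F ⋙ J) (hH₂ : H₂ ⋙ G = F ⋙ J)
    (x : C) (hx : H₁.obj x = H₂.obj x) :
    H₁ = H₂ :=
  covering_morphisms_eq_of_agree_on_object_general k F G hF hG hC J hJlin hJinv H₁ H₂ hH₁ hH₂ x hx
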